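/- arXiv:1503.06347 — 5 statements merged into one kernel-verified Lean document; each statement's English description precedes it below -/
import Mathlib

section
/- Let ℓ > 0, let ν be real, and suppose y : [0,θ₁) → ℝ is continuous with y(0) > 0 and differentiable on (0,θ₁) ⊆ (0,π), satisfying the Riccati equation y'(θ) = sin(θ)·y(θ)² + (2·y(θ)/sin θ)·(ν − cos θ) + ℓ(ℓ+1)/sin θ for all θ ∈ (0,θ₁). Then y(θ) > 0 for all θ ∈ [0,θ₁). -/
open Real

theorem riccati_positivity (ℓ ν θ₁ : ℝ) (hℓ : 0 < ℓ)
    (hsub : Set.Ioo (0:ℝ) θ₁ ⊆ Set.Ioo 0 π)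
    (y : ℝ → ℝ)
    (hcont : ContinuousOn y (Set.Ico 0 θ₁))
    (hy0 : 0 < y 0)
    (hode : ∀ θ ∈ Set.Ioo (0:ℝ) θ₁,
      HasDerivAt y
        (Real.sin θ * y θ ^ 2 + (2 * y θ / Real.sin θ) * (ν - Real.cos θ)
          + ℓ * (ℓ + 1) / Real.sin θ) θ) :
    ∀ θ ∈ Set.Ico (0:ℝ) θ₁, 0 < y θ := by
  by_contra h
  push_neg at h
  obtain ⟨θ₀, hθ₀, hyθ₀⟩ := h
  -- the set of points in [0, θ₀] where y ≤ 0
  set S : Set ℝ := {t | t ∈ Set.Icc (0:ℝ) θ₀ ∧ y t ≤ 0} with hS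
  have hIccsub : Set.Icc (0:ℝ) θ₀ ⊆ Set.Ico 0 θ₁ := fun t ht =>
    ⟨ht.1, lt_of_le_of_lt ht.2 hθ₀.2⟩
  have hScl : IsClosed S := by
    have : S = Set.Icc (0:ℝ) θ₀ ∩ y ⁻¹' Set.Iic 0 := by
      ext t; simp [hS, Set.mem_Icc, and_comm]
    rw [this]
    exact ContinuousOn.preimage_isClosed_of_isClosed (hcont.mono hIccsub)
      isClosed_Icc isClosed_Iic
  have hSne : S.Nonempty := ⟨θ₀, ⟨hθ₀.1, le_refl _⟩, hyθ₀⟩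
  have hSbdd : BddBelow S := ⟨0, fun t ht => ht.1.1⟩
  set c := sInf S with hc
  have hcS : c ∈ S := hScl.csInf_mem hSne hSbdd
  have hcIcc : c ∈ Set.Icc (0:ℝ) θ₀ := hcS.1
  have hyc_le : y c ≤ 0 := hcS.2
  -- y positive on [0, c)
  have hpos : ∀ t, 0 ≤ t → t < c → 0 < y t := by
    intro t ht0 htc
    by_contra hyt
    push_neg at hyt
    have : t ∈ S := ⟨⟨ht0, le_trans htc.le hcIcc.2⟩, hyt⟩
    exact absurd (csInf_le hSbdd this) (not_le.mpr htc)
  -- c > 0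
  have hc0 : 0 < c := by
    rcases lt_or_eq_of_le hcIcc.1 with h | h
    · exact h
    · exact absurd hyc_le (not_le.mpr (h ▸ hy0))
  have hcθ₁ : c < θ₁ := lt_of_le_of_lt hcIcc.2 hθ₀.2
  have hcIoo : c ∈ Set.Ioo (0:ℝ) θ₁ := ⟨hc0, hcθ₁⟩
  -- y c ≥ 0 from the left
  have hmemIoo : Set.Ioo 0 c ∈ nhdsWithin c (Set.Iio c) :=
    Ioo_mem_nhdsLT_of_mem ⟨hc0, le_refl c⟩
  have hyc_ge : 0 ≤ y c := by
    have htend : Filter.Tendsto y (nhdsWithin c (Set.Iio c)) (nhds (y c)) := by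
      have h1 : ContinuousWithinAt y (Set.Ico 0 θ₁) c :=
        hcont c (hIccsub hcIcc)
      refine h1.tendsto.mono_left ?_
      calc nhdsWithin c (Set.Iio c) = nhdsWithin c (Set.Ioo 0 c) :=
            (nhdsWithin_Ioo_eq_nhdsLT hc0).symm
        _ ≤ nhdsWithin c (Set.Ico 0 θ₁) := nhdsWithin_mono _ (fun t ht =>
            ⟨ht.1.le, lt_trans ht.2 hcθ₁⟩)
    refine ge_of_tendsto htend ?_
    filter_upwards [hmemIoo] with t ht
    exact (hpos t ht.1.le ht.2).le
  have hyc : y c = 0 := le_antisymm hyc_le hyc_ge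
  -- the derivative at c
  have hd := hode c hcIoo
  set d := Real.sin c * y c ^ 2 + (2 * y c / Real.sin c) * (ν - Real.cos c)
      + ℓ * (ℓ + 1) / Real.sin c with hdef
  have hsin : 0 < Real.sin c := Real.sin_pos_of_pos_of_lt_pi (hsub hcIoo).1 (hsub hcIoo).2
  have hdpos : 0 < d := by
    rw [hdef, hyc]
    simp
    positivity
  -- left derivative: slope tends to d from the left
  have hslope : Filter.Tendsto (slope y c) (nhdsWithin c (Set.Iio c \ {c})) (nhds d) := by
    have := hasDerivWithinAt_iff_tendsto_slope.mp (hd.hasDerivWithinAt (s := Set.Iio c))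
    exact this
  have hIio : Set.Iio c \ {c} = Set.Iio c := by
    ext t; simp (config := {contextual := true}) [ne_of_lt]
  rw [hIio] at hslope
  have hdle : d ≤ 0 := by
    refine le_of_tendsto hslope ?_
    filter_upwards [hmemIoo] with t ht
    have : slope y c t = y t / (t - c) := by
      simp [slope, hyc, vsub_eq_sub, div_eq_inv_mul]
    rw [this]
    exact le_of_lt (div_neg_of_pos_of_neg (hpos t ht.1.le ht.2) (by linarith [ht.2]))
  linarith
end

section
/- Suppose y₁, y₂ : (0, θ₁] → ℝ are twice differentiable, satisfy y_i'' + cot(θ)·y_i' + (Δ_i − α²/sin²θ)·y_i = 0 on (0, θ₁), are strictly positive on (0, θ₁), vanish at θ₁ (i.e. y₁(θ₁) = y₂(θ₁) = 0), and suppose lim_{θ→0⁺} sin(θ)·(y₁'(θ)·y₂(θ) − y₂'(θ)·y₁(θ)) = c > 0. Then Δ₁ > Δ₂. -/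
open Real

theorem zeros_comparison (θ₁ Δ₁ Δ₂ α c : ℝ) (hθ₁ : 0 < θ₁) (hθ₁' : θ₁ < π)
    (y₁ y₂ y₁' y₂' y₁'' y₂'' : ℝ → ℝ)
    (hy₁ : ∀ θ ∈ Set.Ioc (0:ℝ) θ₁, HasDerivAt y₁ (y₁' θ) θ)
    (hy₁' : ∀ θ ∈ Set.Ioc (0:ℝ) θ₁, HasDerivAt y₁' (y₁'' θ) θ)
    (hy₂ : ∀ θ ∈ Set.Ioc (0:ℝ) θ₁, HasDerivAt y₂ (y₂' θ) θ)
    (hy₂' : ∀ θ ∈ Set.Ioc (0:ℝ) θ₁, HasDerivAt y₂' (y₂'' θ) θ)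
    (hode₁ : ∀ θ ∈ Set.Ioo (0:ℝ) θ₁,
      y₁'' θ + (Real.cos θ / Real.sin θ) * y₁' θ
        + (Δ₁ - α ^ 2 / Real.sin θ ^ 2) * y₁ θ = 0)
    (hode₂ : ∀ θ ∈ Set.Ioo (0:ℝ) θ₁,
      y₂'' θ + (Real.cos θ / Real.sin θ) * y₂' θ
        + (Δ₂ - α ^ 2 / Real.sin θ ^ 2) * y₂ θ = 0)
    (hpos₁ : ∀ θ ∈ Set.Ioo (0:ℝ) θ₁, 0 < y₁ θ)
    (hpos₂ : ∀ θ ∈ Set.Ioo (0:ℝ) θ₁, 0 < y₂ θ)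
    (hzero₁ : y₁ θ₁ = 0) (hzero₂ : y₂ θ₁ = 0)
    (hc : 0 < c)
    (hlim : Filter.Tendsto
      (fun θ => Real.sin θ * (y₁' θ * y₂ θ - y₂' θ * y₁ θ))
      (nhdsWithin 0 (Set.Ioi 0)) (nhds c)) :
    Δ₂ < Δ₁ := by
  by_contra hle
  push_neg at hle
  -- W = sin θ * (y₁' y₂ - y₂' y₁)
  set W : ℝ → ℝ := fun θ => Real.sin θ * (y₁' θ * y₂ θ - y₂' θ * y₁ θ) with hW
  have hWderiv : ∀ θ ∈ Set.Ioc (0:ℝ) θ₁, HasDerivAt W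
      (Real.cos θ * (y₁' θ * y₂ θ - y₂' θ * y₁ θ)
        + Real.sin θ * ((y₁'' θ * y₂ θ + y₁' θ * y₂' θ)
          - (y₂'' θ * y₁ θ + y₂' θ * y₁' θ))) θ := by
    intro θ hθ
    exact (Real.hasDerivAt_sin θ).mul
      (((hy₁' θ hθ).mul (hy₂ θ hθ)).sub ((hy₂' θ hθ).mul (hy₁ θ hθ)))
  -- pick θ₀ ∈ (0, θ₁) with W θ₀ > c/2
  have h₁ : ∀ᶠ θ in nhdsWithin 0 (Set.Ioi 0), c/2 < W θ :=
    hlim.eventually (eventually_gt_nhds (half_lt_self hc))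
  have h₂ : Set.Ioo (0:ℝ) θ₁ ∈ nhdsWithin 0 (Set.Ioi 0) :=
    Ioo_mem_nhdsGT_of_mem (by constructor <;> simp [hθ₁.le, hθ₁])
  obtain ⟨θ₀, hθ₀W, hθ₀⟩ := (h₁.and (Filter.eventually_of_mem h₂ (fun x hx => hx))).exists
  -- W is monotone on [θ₀, θ₁]
  have hsub : Set.Icc θ₀ θ₁ ⊆ Set.Ioc 0 θ₁ := fun x hx => ⟨lt_of_lt_of_le hθ₀.1 hx.1, hx.2⟩
  have hsub' : Set.Ioo θ₀ θ₁ ⊆ Set.Ioo 0 θ₁ := fun x hx => ⟨lt_trans hθ₀.1 hx.1, hx.2⟩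
  have hmono : MonotoneOn W (Set.Icc θ₀ θ₁) := by
    apply monotoneOn_of_deriv_nonneg (convex_Icc θ₀ θ₁)
    · exact fun x hx => ((hWderiv x (hsub hx)).continuousAt).continuousWithinAt
    · intro x hx
      rw [interior_Icc] at hx
      exact ((hWderiv x (hsub ⟨hx.1.le, hx.2.le⟩)).differentiableAt).differentiableWithinAt
    · intro x hx
      rw [interior_Icc] at hx
      have hx' := hsub' hx
      have hs : Real.sin x ≠ 0 :=
        ne_of_gt (Real.sin_pos_of_pos_of_lt_pi hx'.1 (lt_trans hx'.2 hθ₁'))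
      rw [(hWderiv x (hsub ⟨hx.1.le, hx.2.le⟩)).deriv]
      have e₁ : y₁'' x = -(Real.cos x / Real.sin x) * y₁' x
          - (Δ₁ - α ^ 2 / Real.sin x ^ 2) * y₁ x := by linarith [hode₁ x hx']
      have e₂ : y₂'' x = -(Real.cos x / Real.sin x) * y₂' x
          - (Δ₂ - α ^ 2 / Real.sin x ^ 2) * y₂ x := by linarith [hode₂ x hx']
      have key : Real.cos x * (y₁' x * y₂ x - y₂' x * y₁ x)
          + Real.sin x * ((y₁'' x * y₂ x + y₁' x * y₂' x)
            - (y₂'' x * y₁ x + y₂' x * y₁' x))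
          = (Δ₂ - Δ₁) * (Real.sin x * (y₁ x * y₂ x)) := by
        rw [e₁, e₂]; field_simp; ring
      rw [key]
      have := hpos₁ x hx'
      have := hpos₂ x hx'
      have hsx : 0 < Real.sin x := Real.sin_pos_of_pos_of_lt_pi hx'.1 (lt_trans hx'.2 hθ₁')
      have : 0 ≤ Δ₂ - Δ₁ := by linarith
      positivity
  have hW1 : W θ₁ = 0 := by simp [hW, hzero₁, hzero₂]
  have := hmono (Set.left_mem_Icc.2 hθ₀.2.le) (Set.right_mem_Icc.2 hθ₀.2.le) hθ₀.2.le
  rw [hW1] at this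
  linarith
end

section
/- Let ℓ, α be real and let y₁, y₂ be twice differentiable functions on an interval I ⊆ (0, π) satisfying y_i'' + cot θ · y_i' + (ℓ(ℓ+1) − α²/sin²θ)·y_i = 0. Set v = y₁·y₂ and f(θ) = sin^{4−n}(θ)·v(θ) where α = (2−n)/2 and ℓ(ℓ+1) = λ + (n²−2n)/4. Then f satisfies (1/4)f''' + (3/4)(n−3)·cot θ·f'' + f'·( (n−3)(2n−11)/4·cot²θ + (7−n)/4 + λ ) + f·( (n−3)(4−n)·cot³θ + 2(n−3)·cot θ + λ(n−3)·cot θ ) = 0 on I. -/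
open Real

open Polynomial in
noncomputable def clmKP (n lam : ℝ) : Polynomial ℝ :=
  C (lam + (n ^ 2 - 2 * n) / 4) - C ((2 - n) ^ 2 / 4) * (1 + X ^ 2)

open Polynomial in
noncomputable def clmA (n lam : ℝ) (A B : Polynomial ℝ) : Polynomial ℝ :=
  C (4 - n) * X * A - (1 + X ^ 2) * derivative A - 2 * clmKP n lam * B

open Polynomial in
noncomputable def clmB (n lam : ℝ) (A B E : Polynomial ℝ) : Polynomial ℝ :=
  C (4 - n) * X * B + A - X * B - (1 + X ^ 2) * derivative B - clmKP n lam * E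

open Polynomial in
noncomputable def clmE (n lam : ℝ) (B E : Polynomial ℝ) : Polynomial ℝ :=
  C (4 - n) * X * E + 2 * B - 2 * X * E - (1 + X ^ 2) * derivative E

open Polynomial in
lemma claim_4_2_step (n lam : ℝ) (S T V Vp W : ℝ → ℝ) (θ : ℝ) (A B E : Polynomial ℝ)
    (hS : HasDerivAt S ((4 - n) * S θ * T θ) θ)
    (hT : HasDerivAt T (-(1 + T θ ^ 2)) θ)
    (hV : HasDerivAt V (Vp θ) θ)
    (hVp : HasDerivAt Vp (-(T θ) * Vp θ - 2 * (clmKP n lam).eval (T θ) * V θ + 2 * W θ) θ)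
    (hW : HasDerivAt W (-2 * T θ * W θ - (clmKP n lam).eval (T θ) * Vp θ) θ) :
    HasDerivAt (fun x => S x * (A.eval (T x) * V x + B.eval (T x) * Vp x + E.eval (T x) * W x))
      (S θ * ((clmA n lam A B).eval (T θ) * V θ + (clmB n lam A B E).eval (T θ) * Vp θ
        + (clmE n lam B E).eval (T θ) * W θ)) θ := by
  have hA : HasDerivAt (fun x => A.eval (T x)) ((derivative A).eval (T θ) * (-(1 + T θ ^ 2))) θ :=
    (A.hasDerivAt (T θ)).comp θ hT
  have hB : HasDerivAt (fun x => B.eval (T x)) ((derivative B).eval (T θ) * (-(1 + T θ ^ 2))) θ :=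
    (B.hasDerivAt (T θ)).comp θ hT
  have hE : HasDerivAt (fun x => E.eval (T x)) ((derivative E).eval (T θ) * (-(1 + T θ ^ 2))) θ :=
    (E.hasDerivAt (T θ)).comp θ hT
  have h := hS.mul (((hA.mul hV).add (hB.mul hVp)).add (hE.mul hW))
  refine h.congr_deriv (Eq.symm ?_)
  simp only [clmA, clmB, clmE, eval_add, eval_sub, eval_mul, eval_C, eval_X, eval_pow,
    eval_one, eval_ofNat, Pi.mul_apply, Pi.add_apply]
  ring

theorem claim_4_2 (n lam a b ℓ α : ℝ) (hn2 : 2 < n) (hn4 : n < 4)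
    (hα : α = (2 - n) / 2) (hℓeq : ℓ * (ℓ + 1) = lam + (n ^ 2 - 2 * n) / 4)
    (hlam : 0 ≤ 4 * lam + (n - 1) ^ 2)
    (hab : Set.Ioo a b ⊆ Set.Ioo 0 π)
    (y₁ y₂ : ℝ → ℝ)
    (hdiff₁ : ∀ θ ∈ Set.Ioo a b, DifferentiableAt ℝ y₁ θ ∧ DifferentiableAt ℝ (deriv y₁) θ)
    (hdiff₂ : ∀ θ ∈ Set.Ioo a b, DifferentiableAt ℝ y₂ θ ∧ DifferentiableAt ℝ (deriv y₂) θ)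
    (hode₁ : ∀ θ ∈ Set.Ioo a b,
      deriv (deriv y₁) θ + (Real.cos θ / Real.sin θ) * deriv y₁ θ
        + (ℓ * (ℓ + 1) - α ^ 2 / Real.sin θ ^ 2) * y₁ θ = 0)
    (hode₂ : ∀ θ ∈ Set.Ioo a b,
      deriv (deriv y₂) θ + (Real.cos θ / Real.sin θ) * deriv y₂ θ
        + (ℓ * (ℓ + 1) - α ^ 2 / Real.sin θ ^ 2) * y₂ θ = 0)
    (f : ℝ → ℝ) (hf : f = fun θ => Real.sin θ ^ (4 - n) * (y₁ θ * y₂ θ)) :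
    ∀ θ ∈ Set.Ioo a b,
      (1 / 4) * deriv (deriv (deriv f)) θ
        + (3 / 4) * (n - 3) * (Real.cos θ / Real.sin θ) * deriv (deriv f) θ
        + deriv f θ *
            ((n - 3) * (2 * n - 11) / 4 * (Real.cos θ / Real.sin θ) ^ 2
              + (7 - n) / 4 + lam)
        + f θ *
            ((n - 3) * (4 - n) * (Real.cos θ / Real.sin θ) ^ 3
              + 2 * (n - 3) * (Real.cos θ / Real.sin θ)
              + lam * (n - 3) * (Real.cos θ / Real.sin θ)) = 0 := by
  have hO : IsOpen (Set.Ioo a b) := isOpen_Ioo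
  -- basic positivity of sin on the interval
  have hsin : ∀ x ∈ Set.Ioo a b, Real.sin x ≠ 0 := by
    intro x hx
    have h0 := hab hx
    exact ne_of_gt (Real.sin_pos_of_pos_of_lt_pi h0.1 h0.2)
  -- notation
  set T : ℝ → ℝ := fun x => Real.cos x / Real.sin x with hT_def
  set S : ℝ → ℝ := fun x => Real.sin x ^ (4 - n) with hS_def
  set V : ℝ → ℝ := fun x => y₁ x * y₂ x with hV_def
  set Vp : ℝ → ℝ := fun x => deriv y₁ x * y₂ x + y₁ x * deriv y₂ x with hVp_def
  set W : ℝ → ℝ := fun x => deriv y₁ x * deriv y₂ x with hW_def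
  have hS : ∀ x ∈ Set.Ioo a b, HasDerivAt S ((4 - n) * S x * T x) x := by
    intro x hx
    have hs := hsin x hx
    have hs0 : (0:ℝ) < Real.sin x := (Real.sin_pos_of_pos_of_lt_pi (hab hx).1 (hab hx).2)
    have h := (Real.hasDerivAt_rpow_const (p := 4 - n) (Or.inl hs)).comp x (Real.hasDerivAt_sin x)
    refine h.congr_deriv (Eq.symm ?_)
    have : Real.sin x ^ (4 - n - 1) = Real.sin x ^ (4 - n) / Real.sin x := by
      rw [show (4 - n - 1 : ℝ) = (4 - n) - 1 by ring, Real.rpow_sub hs0, Real.rpow_one]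
    simp only [Function.comp, hS_def, hT_def, this]
    field_simp
  have hT : ∀ x ∈ Set.Ioo a b, HasDerivAt T (-(1 + T x ^ 2)) x := by
    intro x hx
    have hs := hsin x hx
    have h := (Real.hasDerivAt_cos x).div (Real.hasDerivAt_sin x) hs
    refine h.congr_deriv (Eq.symm ?_)
    simp only [hT_def]
    field_simp
    ring
  have hK : ∀ x ∈ Set.Ioo a b,
      ℓ * (ℓ + 1) - α ^ 2 / Real.sin x ^ 2 = (clmKP n lam).eval (T x) := by
    intro x hx
    have hs := hsin x hx
    simp only [clmKP, Polynomial.eval_sub, Polynomial.eval_add, Polynomial.eval_mul,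
      Polynomial.eval_C, Polynomial.eval_one, Polynomial.eval_pow, Polynomial.eval_X, hT_def]
    rw [hℓeq, hα]
    field_simp
    linear_combination (16 - 16 * n + 4 * n ^ 2) * Real.sin_sq_add_cos_sq x
  have hy1 : ∀ x ∈ Set.Ioo a b, HasDerivAt y₁ (deriv y₁ x) x :=
    fun x hx => (hdiff₁ x hx).1.hasDerivAt
  have hy2 : ∀ x ∈ Set.Ioo a b, HasDerivAt y₂ (deriv y₂ x) x :=
    fun x hx => (hdiff₂ x hx).1.hasDerivAt
  have hdy1 : ∀ x ∈ Set.Ioo a b, HasDerivAt (deriv y₁) (deriv (deriv y₁) x) x :=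
    fun x hx => (hdiff₁ x hx).2.hasDerivAt
  have hdy2 : ∀ x ∈ Set.Ioo a b, HasDerivAt (deriv y₂) (deriv (deriv y₂) x) x :=
    fun x hx => (hdiff₂ x hx).2.hasDerivAt
  have hdd1 : ∀ x ∈ Set.Ioo a b,
      deriv (deriv y₁) x = -(T x) * deriv y₁ x - (clmKP n lam).eval (T x) * y₁ x := by
    intro x hx
    have h := hode₁ x hx
    rw [← hK x hx]
    simp only [hT_def] at *
    linarith
  have hdd2 : ∀ x ∈ Set.Ioo a b,
      deriv (deriv y₂) x = -(T x) * deriv y₂ x - (clmKP n lam).eval (T x) * y₂ x := by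
    intro x hx
    have h := hode₂ x hx
    rw [← hK x hx]
    simp only [hT_def] at *
    linarith
  have hV : ∀ x ∈ Set.Ioo a b, HasDerivAt V (Vp x) x :=
    fun x hx => (hy1 x hx).mul (hy2 x hx)
  have hVp : ∀ x ∈ Set.Ioo a b,
      HasDerivAt Vp (-(T x) * Vp x - 2 * (clmKP n lam).eval (T x) * V x + 2 * W x) x := by
    intro x hx
    have h := ((hdy1 x hx).mul (hy2 x hx)).add ((hy1 x hx).mul (hdy2 x hx))
    refine h.congr_deriv (Eq.symm ?_)
    rw [hdd1 x hx, hdd2 x hx]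
    simp only [hV_def, hVp_def, hW_def]
    ring
  have hW : ∀ x ∈ Set.Ioo a b,
      HasDerivAt W (-2 * T x * W x - (clmKP n lam).eval (T x) * Vp x) x := by
    intro x hx
    have h := (hdy1 x hx).mul (hdy2 x hx)
    refine h.congr_deriv (Eq.symm ?_)
    rw [hdd1 x hx, hdd2 x hx]
    simp only [hVp_def, hW_def]
    ring
  -- the generic step
  have key : ∀ (A B E : Polynomial ℝ), ∀ x ∈ Set.Ioo a b,
      HasDerivAt (fun y => S y * (A.eval (T y) * V y + B.eval (T y) * Vp y + E.eval (T y) * W y))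
        (S x * ((clmA n lam A B).eval (T x) * V x + (clmB n lam A B E).eval (T x) * Vp x
          + (clmE n lam B E).eval (T x) * W x)) x :=
    fun A B E x hx =>
      claim_4_2_step n lam S T V Vp W x A B E (hS x hx) (hT x hx) (hV x hx) (hVp x hx) (hW x hx)
  -- the iterated coefficient polynomials
  set A1 : Polynomial ℝ := clmA n lam 1 0 with hA1
  set B1 : Polynomial ℝ := clmB n lam 1 0 0 with hB1
  set E1 : Polynomial ℝ := clmE n lam 0 0 with hE1
  set A2 : Polynomial ℝ := clmA n lam A1 B1 with hA2
  set B2 : Polynomial ℝ := clmB n lam A1 B1 E1 with hB2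
  set E2 : Polynomial ℝ := clmE n lam B1 E1 with hE2
  set A3 : Polynomial ℝ := clmA n lam A2 B2 with hA3
  set B3 : Polynomial ℝ := clmB n lam A2 B2 E2 with hB3
  set E3 : Polynomial ℝ := clmE n lam B2 E2 with hE3
  have hf0 : f = fun y => S y * ((1 : Polynomial ℝ).eval (T y) * V y
      + (0 : Polynomial ℝ).eval (T y) * Vp y + (0 : Polynomial ℝ).eval (T y) * W y) := by
    funext y
    simp [hf, hS_def, hV_def]
  have hd1 : ∀ x ∈ Set.Ioo a b,
      HasDerivAt f (S x * (A1.eval (T x) * V x + B1.eval (T x) * Vp x + E1.eval (T x) * W x)) x := by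
    intro x hx
    rw [hf0]
    exact key 1 0 0 x hx
  have hd1' : ∀ x ∈ Set.Ioo a b,
      deriv f x = S x * (A1.eval (T x) * V x + B1.eval (T x) * Vp x + E1.eval (T x) * W x) :=
    fun x hx => (hd1 x hx).deriv
  have hd2 : ∀ x ∈ Set.Ioo a b,
      HasDerivAt (deriv f)
        (S x * (A2.eval (T x) * V x + B2.eval (T x) * Vp x + E2.eval (T x) * W x)) x := by
    intro x hx
    refine (key A1 B1 E1 x hx).congr_of_eventuallyEq ?_
    filter_upwards [hO.mem_nhds hx] with y hy
    exact hd1' y hy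
  have hd2' : ∀ x ∈ Set.Ioo a b,
      deriv (deriv f) x = S x * (A2.eval (T x) * V x + B2.eval (T x) * Vp x + E2.eval (T x) * W x) :=
    fun x hx => (hd2 x hx).deriv
  have hd3 : ∀ x ∈ Set.Ioo a b,
      HasDerivAt (deriv (deriv f))
        (S x * (A3.eval (T x) * V x + B3.eval (T x) * Vp x + E3.eval (T x) * W x)) x := by
    intro x hx
    refine (key A2 B2 E2 x hx).congr_of_eventuallyEq ?_
    filter_upwards [hO.mem_nhds hx] with y hy
    exact hd2' y hy
  have hd3' : ∀ x ∈ Set.Ioo a b,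
      deriv (deriv (deriv f)) x
        = S x * (A3.eval (T x) * V x + B3.eval (T x) * Vp x + E3.eval (T x) * W x) :=
    fun x hx => (hd3 x hx).deriv
  intro θ hθ
  have hfθ : f θ = S θ * V θ := by simp [hf, hS_def, hV_def]
  rw [hd1' θ hθ, hd2' θ hθ, hd3' θ hθ, hfθ]
  have hTθ : Real.cos θ / Real.sin θ = T θ := rfl
  rw [hTθ]
  simp only [hA3, hB3, hE3, hA2, hB2, hE2, hA1, hB1, hE1, clmA, clmB, clmE, clmKP,
    Polynomial.derivative_sub, Polynomial.derivative_add, Polynomial.derivative_mul,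
    Polynomial.derivative_C, Polynomial.derivative_X, Polynomial.derivative_one,
    Polynomial.derivative_ofNat, Polynomial.derivative_X_pow, Polynomial.derivative_zero,
    Polynomial.eval_add, Polynomial.eval_sub, Polynomial.eval_mul, Polynomial.eval_C,
    Polynomial.eval_X, Polynomial.eval_pow, Polynomial.eval_one, Polynomial.eval_ofNat,
    Polynomial.eval_zero, Polynomial.eval_natCast]
  ring
end

section
/- Let k(θ) = ℓ(ℓ+1) − α²/sin²θ and let y₁, y₂ : I → ℝ both satisfy y'' + cot θ · y' + k·y = 0 on an interval I ⊆ (0,π). Then v = y₁·y₂ satisfies v''' + 3cot θ·v'' + v'·(4k − csc²θ + 2cot²θ) + 4v·(α²·cot θ·csc²θ + k·cot θ) = 0 on I. -/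
open Real

set_option maxHeartbeats 2000000 in
theorem product_third_order_ODE (a b ℓ α : ℝ)
    (hab : Set.Ioo a b ⊆ Set.Ioo 0 π)
    (y₁ y₂ : ℝ → ℝ)
    (hdiff₁ : ∀ θ ∈ Set.Ioo a b, DifferentiableAt ℝ y₁ θ ∧ DifferentiableAt ℝ (deriv y₁) θ)
    (hdiff₂ : ∀ θ ∈ Set.Ioo a b, DifferentiableAt ℝ y₂ θ ∧ DifferentiableAt ℝ (deriv y₂) θ)
    (hode₁ : ∀ θ ∈ Set.Ioo a b,
      deriv (deriv y₁) θ + (Real.cos θ / Real.sin θ) * deriv y₁ θ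
        + (ℓ * (ℓ + 1) - α ^ 2 / Real.sin θ ^ 2) * y₁ θ = 0)
    (hode₂ : ∀ θ ∈ Set.Ioo a b,
      deriv (deriv y₂) θ + (Real.cos θ / Real.sin θ) * deriv y₂ θ
        + (ℓ * (ℓ + 1) - α ^ 2 / Real.sin θ ^ 2) * y₂ θ = 0) :
    ∀ θ ∈ Set.Ioo a b,
      deriv (deriv (deriv (fun t => y₁ t * y₂ t))) θ
        + 3 * (Real.cos θ / Real.sin θ) * deriv (deriv (fun t => y₁ t * y₂ t)) θ
        + deriv (fun t => y₁ t * y₂ t) θ *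
            (4 * (ℓ * (ℓ + 1) - α ^ 2 / Real.sin θ ^ 2) - (1 / Real.sin θ) ^ 2
              + 2 * (Real.cos θ / Real.sin θ) ^ 2)
        + 4 * (y₁ θ * y₂ θ) *
            (α ^ 2 * (Real.cos θ / Real.sin θ) * (1 / Real.sin θ) ^ 2
              + (ℓ * (ℓ + 1) - α ^ 2 / Real.sin θ ^ 2) * (Real.cos θ / Real.sin θ)) = 0 := by
  have hsin : ∀ t ∈ Set.Ioo a b, Real.sin t ≠ 0 := fun t ht =>
    ne_of_gt (Real.sin_pos_of_pos_of_lt_pi (hab ht).1 (hab ht).2)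
  have h2₁ : ∀ t ∈ Set.Ioo a b, deriv (deriv y₁) t
      = -((Real.cos t / Real.sin t) * deriv y₁ t
          + (ℓ * (ℓ + 1) - α ^ 2 / Real.sin t ^ 2) * y₁ t) := by
    intro t ht; have h := hode₁ t ht; linarith
  have h2₂ : ∀ t ∈ Set.Ioo a b, deriv (deriv y₂) t
      = -((Real.cos t / Real.sin t) * deriv y₂ t
          + (ℓ * (ℓ + 1) - α ^ 2 / Real.sin t ^ 2) * y₂ t) := by
    intro t ht; have h := hode₂ t ht; linarith
  have hv' : ∀ t ∈ Set.Ioo a b, deriv (fun t => y₁ t * y₂ t) t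
      = deriv y₁ t * y₂ t + y₁ t * deriv y₂ t := fun t ht =>
    deriv_mul (hdiff₁ t ht).1 (hdiff₂ t ht).1
  have hv'' : ∀ t ∈ Set.Ioo a b, deriv (deriv (fun t => y₁ t * y₂ t)) t
      = deriv (deriv y₁) t * y₂ t + 2 * (deriv y₁ t * deriv y₂ t)
        + y₁ t * deriv (deriv y₂) t := by
    intro t ht
    have heq : deriv (fun t => y₁ t * y₂ t)
        =ᶠ[nhds t] fun s => deriv y₁ s * y₂ s + y₁ s * deriv y₂ s :=
      Filter.eventuallyEq_of_mem (isOpen_Ioo.mem_nhds ht) hv'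
    rw [heq.deriv_eq]
    have H : HasDerivAt (fun s => deriv y₁ s * y₂ s + y₁ s * deriv y₂ s)
        ((deriv (deriv y₁) t * y₂ t + deriv y₁ t * deriv y₂ t)
          + (deriv y₁ t * deriv y₂ t + y₁ t * deriv (deriv y₂) t)) t :=
      (((hdiff₁ t ht).2.hasDerivAt.mul (hdiff₂ t ht).1.hasDerivAt)).add
        (((hdiff₁ t ht).1.hasDerivAt.mul (hdiff₂ t ht).2.hasDerivAt))
    rw [H.deriv]; ring
  intro θ hθ
  have hs0 : Real.sin θ ≠ 0 := hsin θ hθ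
  have hs2 : Real.sin θ ^ 2 ≠ 0 := pow_ne_zero 2 hs0
  have heq2 : deriv (deriv (fun t => y₁ t * y₂ t))
      =ᶠ[nhds θ] fun s =>
        -((Real.cos s / Real.sin s) * deriv y₁ s
            + (ℓ * (ℓ + 1) - α ^ 2 / Real.sin s ^ 2) * y₁ s) * y₂ s
        + 2 * (deriv y₁ s * deriv y₂ s)
        + y₁ s * -((Real.cos s / Real.sin s) * deriv y₂ s
            + (ℓ * (ℓ + 1) - α ^ 2 / Real.sin s ^ 2) * y₂ s) :=
    Filter.eventuallyEq_of_mem (isOpen_Ioo.mem_nhds hθ)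
      (fun s hs => by rw [hv'' s hs, h2₁ s hs, h2₂ s hs])
  have hC : HasDerivAt (fun s => Real.cos s / Real.sin s) (-1 / Real.sin θ ^ 2) θ := by
    have h : HasDerivAt (fun s => Real.cos s / Real.sin s)
        ((-Real.sin θ * Real.sin θ - Real.cos θ * Real.cos θ) / Real.sin θ ^ 2) θ :=
      (Real.hasDerivAt_cos θ).div (Real.hasDerivAt_sin θ) hs0
    convert h using 1
    field_simp
    linear_combination Real.sin_sq_add_cos_sq θ
  have hK : HasDerivAt (fun s => ℓ * (ℓ + 1) - α ^ 2 / Real.sin s ^ 2)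
      (2 * α ^ 2 * Real.cos θ / Real.sin θ ^ 3) θ := by
    have hpow : HasDerivAt (fun s => Real.sin s ^ 2)
        (2 * Real.sin θ * Real.cos θ) θ := by
      have h : HasDerivAt (fun s => Real.sin s ^ 2)
          (((2 : ℕ) : ℝ) * Real.sin θ ^ (2 - 1) * Real.cos θ) θ := (Real.hasDerivAt_sin θ).pow 2
      convert h using 1; ring
    have h : HasDerivAt (fun s => ℓ * (ℓ + 1) - α ^ 2 / Real.sin s ^ 2)
        (0 - (0 * Real.sin θ ^ 2 - α ^ 2 * (2 * Real.sin θ * Real.cos θ)) / (Real.sin θ ^ 2) ^ 2) θ :=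
      (hasDerivAt_const θ (ℓ * (ℓ + 1))).sub
      ((hasDerivAt_const θ (α ^ 2)).div hpow hs2)
    convert h using 1
    field_simp
    ring
  have hy1 : HasDerivAt y₁ (deriv y₁ θ) θ := (hdiff₁ θ hθ).1.hasDerivAt
  have hy2 : HasDerivAt y₂ (deriv y₂ θ) θ := (hdiff₂ θ hθ).1.hasDerivAt
  have hy1' : HasDerivAt (deriv y₁)
      (-((Real.cos θ / Real.sin θ) * deriv y₁ θ
          + (ℓ * (ℓ + 1) - α ^ 2 / Real.sin θ ^ 2) * y₁ θ)) θ := by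
    have h := (hdiff₁ θ hθ).2.hasDerivAt; rwa [h2₁ θ hθ] at h
  have hy2' : HasDerivAt (deriv y₂)
      (-((Real.cos θ / Real.sin θ) * deriv y₂ θ
          + (ℓ * (ℓ + 1) - α ^ 2 / Real.sin θ ^ 2) * y₂ θ)) θ := by
    have h := (hdiff₂ θ hθ).2.hasDerivAt; rwa [h2₂ θ hθ] at h
  have hq := ((((hC.mul hy1').add (hK.mul hy1)).neg.mul hy2).add
      ((hy1'.mul hy2').const_mul 2)).add
      (hy1.mul (((hC.mul hy2').add (hK.mul hy2)).neg))
  have h3 := hq.deriv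
  simp only [Pi.mul_def, Pi.add_def, Pi.neg_def] at h3
  rw [heq2.deriv_eq, h3, hv'' θ hθ, hv' θ hθ, h2₁ θ hθ, h2₂ θ hθ]
  field_simp
  ring
end

section
/- Let n be real with 2 < n < 4, θ₁ ∈ (0, π), p = (n+2)/(n−2), λ ∈ ℝ. Suppose u : [0, θ₁] → ℝ is twice continuously differentiable, satisfies −(sin^{n−1}θ·u')' = sin^{n−1}θ·(u^p + λu) on (0,θ₁), with u'(0) = 0 and u(θ₁) = 0. Let g : [0,θ₁] → ℝ be smooth with g(0) = g'(0) = 0, and set h = (1/2)·g'·sin^{n−1}θ. Then (1/2)·sin^{2n−2}(θ₁)·u'(θ₁)²·g(θ₁) = ∫₀^{θ₁} B·u^{p+1} dθ + ∫₀^{θ₁} A·u² dθ, where A = λ·( h·sin^{n−1}θ + (1/2)g'·sin^{2n−2}θ + (n−1)·g·sin^{2n−3}θ·cos θ ) + (1/2)h''·sin^{n−1}θ + (1/2)(n−1)h'·sin^{n−2}θ·cos θ, and B = h·sin^{n−1}θ + g'·sin^{2n−2}θ/(p+1) + (2n−2)·g·sin^{2n−3}θ·cos θ/(p+1). -/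
open Real MeasureTheory intervalIntegral

theorem pohozaev_identity (n θ₁ p lam : ℝ) (hn2 : 2 < n) (hn4 : n < 4)
    (hθ₁ : θ₁ ∈ Set.Ioo 0 π) (hp : p = (n + 2) / (n - 2))
    (u g h A B : ℝ → ℝ)
    (hu : ContDiffOn ℝ 2 u (Set.Icc 0 θ₁))
    (hg : ContDiffOn ℝ (⊤ : ℕ∞) g (Set.Icc 0 θ₁))
    (hode : ∀ θ ∈ Set.Ioo (0:ℝ) θ₁,
      -(derivWithin (fun t => Real.sin t ^ (n - 1) * derivWithin u (Set.Icc 0 θ₁) t)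
          (Set.Icc 0 θ₁) θ)
        = Real.sin θ ^ (n - 1) * (u θ ^ p + lam * u θ))
    (hu'0 : derivWithin u (Set.Icc 0 θ₁) 0 = 0) (huθ₁ : u θ₁ = 0)
    (hg0 : g 0 = 0) (hg'0 : derivWithin g (Set.Icc 0 θ₁) 0 = 0)
    (hh : h = fun θ => (1 / 2) * derivWithin g (Set.Icc 0 θ₁) θ * Real.sin θ ^ (n - 1))
    (hA : A = fun θ =>
      lam * (h θ * Real.sin θ ^ (n - 1)
          + (1 / 2) * derivWithin g (Set.Icc 0 θ₁) θ * Real.sin θ ^ (2 * n - 2)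
          + (n - 1) * g θ * Real.sin θ ^ (2 * n - 3) * Real.cos θ)
        + (1 / 2) * derivWithin (derivWithin h (Set.Icc 0 θ₁)) (Set.Icc 0 θ₁) θ
            * Real.sin θ ^ (n - 1)
        + (1 / 2) * (n - 1) * derivWithin h (Set.Icc 0 θ₁) θ
            * Real.sin θ ^ (n - 2) * Real.cos θ)
    (hB : B = fun θ =>
      h θ * Real.sin θ ^ (n - 1)
        + derivWithin g (Set.Icc 0 θ₁) θ * Real.sin θ ^ (2 * n - 2) / (p + 1)
        + (2 * n - 2) * g θ * Real.sin θ ^ (2 * n - 3) * Real.cos θ / (p + 1))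
    (hintB : IntervalIntegrable (fun θ => B θ * u θ ^ (p + 1)) volume 0 θ₁)
    (hintA : IntervalIntegrable (fun θ => A θ * u θ ^ 2) volume 0 θ₁) :
    (1 / 2) * Real.sin θ₁ ^ (2 * n - 2) * (derivWithin u (Set.Icc 0 θ₁) θ₁) ^ 2 * g θ₁
      = (∫ θ in (0:ℝ)..θ₁, B θ * u θ ^ (p + 1)) + ∫ θ in (0:ℝ)..θ₁, A θ * u θ ^ 2 := by
  obtain ⟨hθ0, hθπ⟩ := hθ₁
  have hsinθ₁ : 0 < Real.sin θ₁ := Real.sin_pos_of_pos_of_lt_pi hθ0 hθπ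
  have hn1 : (1:ℝ) ≤ n - 1 := by linarith
  have hn2' : (0:ℝ) < n - 2 := by linarith
  have hp3 : 3 < p := by
    rw [hp, lt_div_iff₀ hn2']; linarith
  have hp1 : (0:ℝ) < p + 1 := by linarith
  have hp1' : p + 1 ≠ 0 := ne_of_gt hp1
  have hpne : p ≠ 0 := by linarith
  have hud : UniqueDiffOn ℝ (Set.Icc (0:ℝ) θ₁) := uniqueDiffOn_Icc hθ0
  set u' := derivWithin u (Set.Icc 0 θ₁) with hu'def
  set g' := derivWithin g (Set.Icc 0 θ₁) with hg'def
  set h' := derivWithin h (Set.Icc 0 θ₁) with hh'def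
  set h'' := derivWithin h' (Set.Icc 0 θ₁) with hh''def
  -- rpow helper lemmas
  have r1 : ∀ x : ℝ, 0 < x → x ^ (2*n-2) = (x ^ (n-1))^2 := by
    intro x hx
    rw [← Real.rpow_natCast (x ^ (n-1)) 2, ← Real.rpow_mul hx.le]
    norm_num
    congr 1
    ring
  have r2 : ∀ x : ℝ, 0 < x → x ^ (2*n-3) = x ^ (n-1) * x ^ (n-2) := by
    intro x hx
    rw [← Real.rpow_add hx]
    congr 1
    ring
  have r3 : ∀ x : ℝ, x ^ (p+1) = x ^ p * x := by
    intro x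
    rcases eq_or_ne x 0 with rfl | hx
    · rw [Real.zero_rpow hp1', Real.zero_rpow hpne, mul_zero]
    · exact Real.rpow_add_one hx p
  -- the weight s and its derivative
  have hs_deriv : ∀ t : ℝ,
      HasDerivAt (fun x => Real.sin x ^ (n-1)) ((n-1) * Real.sin t ^ (n-2) * Real.cos t) t := by
    intro t
    have := (Real.hasDerivAt_sin t).rpow_const (p := n-1) (Or.inr hn1)
    rw [show n - 1 - 1 = n - 2 by ring] at this
    convert this using 1
    ring
  have hsC1 : ContDiff ℝ 1 (fun x => Real.sin x ^ (n-1)) := by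
    have : ContDiff ℝ (1:ℕ) (fun x => Real.sin x ^ (n-1)) :=
      ((Real.contDiff_sin (n := ⊤)).of_le (by simp)).rpow_const_of_le (by push_cast; linarith)
    exact_mod_cast this
  have hscont : ContinuousOn (fun x => Real.sin x ^ (n-1)) (Set.Icc 0 θ₁) :=
    hsC1.continuous.continuousOn
  -- regularity of u', g', h, h'
  have hu'C : ContDiffOn ℝ 1 u' (Set.Icc 0 θ₁) := hu.derivWithin hud (by norm_num)
  have hg'C : ContDiffOn ℝ 2 g' (Set.Icc 0 θ₁) := hg.derivWithin hud (WithTop.coe_le_coe.mpr le_top)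
  have hhC1 : ContDiffOn ℝ 1 h (Set.Icc 0 θ₁) := by
    rw [hh]
    exact (contDiffOn_const.mul (hg'C.of_le (by norm_num))).mul (hsC1.contDiffOn)
  have hh'cont : ContinuousOn h' (Set.Icc 0 θ₁) := hhC1.continuousOn_derivWithin hud le_rfl
  have hu'cont : ContinuousOn u' (Set.Icc 0 θ₁) := hu'C.continuousOn
  -- smooth local model for h on the open interval
  have hsinpos : ∀ t ∈ Set.Ioo (0:ℝ) θ₁, 0 < Real.sin t := fun t ht =>
    Real.sin_pos_of_pos_of_lt_pi ht.1 (lt_trans ht.2 hθπ)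
  have hmemI : ∀ t ∈ Set.Ioo (0:ℝ) θ₁, Set.Icc (0:ℝ) θ₁ ∈ nhds t := fun t ht =>
    Icc_mem_nhds ht.1 ht.2
  have hg'eq : ∀ t ∈ Set.Ioo (0:ℝ) θ₁, g' t = deriv g t := fun t ht =>
    derivWithin_of_mem_nhds (hmemI t ht)
  have hdgO : ContDiffOn ℝ 2 (deriv g) (Set.Ioo (0:ℝ) θ₁) :=
    (hg.mono Set.Ioo_subset_Icc_self).deriv_of_isOpen isOpen_Ioo (WithTop.coe_le_coe.mpr le_top)
  have hsO : ContDiffOn ℝ 2 (fun x => Real.sin x ^ (n-1)) (Set.Ioo (0:ℝ) θ₁) := fun x hx =>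
    ((Real.contDiff_sin.contDiffAt).rpow_const_of_ne (ne_of_gt (hsinpos x hx))).contDiffWithinAt
  have hHO : ContDiffOn ℝ 2 (fun x => (1/2) * deriv g x * Real.sin x ^ (n-1))
      (Set.Ioo (0:ℝ) θ₁) := (contDiffOn_const.mul hdgO).mul hsO
  have hhHeq : ∀ t ∈ Set.Ioo (0:ℝ) θ₁,
      h t = (1/2) * deriv g t * Real.sin t ^ (n-1) := by
    intro t ht
    rw [hh]
    simp only
    rw [hg'eq t ht]
  have hev : ∀ t ∈ Set.Ioo (0:ℝ) θ₁,
      h =ᶠ[nhds t] (fun x => (1/2) * deriv g x * Real.sin x ^ (n-1)) := fun t ht =>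
    Filter.eventuallyEq_of_mem (isOpen_Ioo.mem_nhds ht) (fun x hx => hhHeq x hx)
  have hh'eqH : ∀ t ∈ Set.Ioo (0:ℝ) θ₁,
      h' t = deriv (fun x => (1/2) * deriv g x * Real.sin x ^ (n-1)) t := by
    intro t ht
    rw [hh'def, derivWithin_of_mem_nhds (hmemI t ht)]
    exact (hev t ht).deriv_eq
  -- the key function F
  set F : ℝ → ℝ := fun t =>
      1/2 * (Real.sin t ^ (n-1) * u' t)^2 * g t
      + (Real.sin t ^ (n-1))^2 * g t * (u t ^ (p+1) / (p+1) + lam/2 * u t^2)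
      - Real.sin t ^ (n-1) * u' t * (h t * u t)
      + 1/2 * (h' t * Real.sin t ^ (n-1) * u t^2) with hFdef
  -- derivative of F at interior points
  have key : ∀ θ ∈ Set.Ioo (0:ℝ) θ₁,
      HasDerivAt F (B θ * u θ ^ (p+1) + A θ * u θ^2) θ := by
    intro θ hθ
    have hmem := hmemI θ hθ
    have hsθ : 0 < Real.sin θ := hsinpos θ hθ
    have hθI : θ ∈ Set.Icc (0:ℝ) θ₁ := Set.Ioo_subset_Icc_self hθ
    -- HasDerivAt u
    have hdiffu : DifferentiableAt ℝ u θ :=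
      ((hu.differentiableOn (by norm_num)) θ hθI).differentiableAt hmem
    have hdu : HasDerivAt u (u' θ) θ := by
      rw [hu'def, derivWithin_of_mem_nhds hmem]
      exact hdiffu.hasDerivAt
    -- HasDerivAt of the flux w = s * u'
    have hdu' : DifferentiableAt ℝ u' θ :=
      ((hu'C.differentiableOn one_ne_zero) θ hθI).differentiableAt hmem
    have hdw : HasDerivAt (fun t => Real.sin t ^ (n-1) * u' t)
        (-(Real.sin θ ^ (n-1) * (u θ ^ p + lam * u θ))) θ := by
      have hdiffw : DifferentiableAt ℝ (fun t => Real.sin t ^ (n-1) * u' t) θ :=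
        (hs_deriv θ).differentiableAt.mul hdu'
      have e : deriv (fun t => Real.sin t ^ (n-1) * u' t) θ
          = -(Real.sin θ ^ (n-1) * (u θ ^ p + lam * u θ)) := by
        have h2 := hode θ hθ
        rw [derivWithin_of_mem_nhds hmem] at h2
        linarith
      rw [← e]
      exact hdiffw.hasDerivAt
    -- HasDerivAt g
    have hdg : HasDerivAt g (g' θ) θ := by
      rw [hg'def, derivWithin_of_mem_nhds hmem]
      exact (((hg.differentiableOn (by simp)) θ hθI).differentiableAt hmem).hasDerivAt
    -- HasDerivAt h
    have hdh : HasDerivAt h (h' θ) θ := by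
      rw [hh'def, derivWithin_of_mem_nhds hmem]
      exact (((hhC1.differentiableOn one_ne_zero) θ hθI).differentiableAt hmem).hasDerivAt
    -- HasDerivAt h'
    have hdh' : HasDerivAt h' (h'' θ) θ := by
      have hdHdiff : DifferentiableAt ℝ
          (deriv (fun x => (1/2) * deriv g x * Real.sin x ^ (n-1))) θ :=
        (((hHO.deriv_of_isOpen (m := 1) isOpen_Ioo le_rfl).differentiableOn one_ne_zero) θ hθ).differentiableAt
          (isOpen_Ioo.mem_nhds hθ)
      have hevh' : h' =ᶠ[nhds θ]
          deriv (fun x => (1/2) * deriv g x * Real.sin x ^ (n-1)) :=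
        Filter.eventuallyEq_of_mem (isOpen_Ioo.mem_nhds hθ) (fun x hx => hh'eqH x hx)
      have hval : h'' θ
          = deriv (deriv (fun x => (1/2) * deriv g x * Real.sin x ^ (n-1))) θ := by
        rw [hh''def, derivWithin_of_mem_nhds hmem]
        exact hevh'.deriv_eq
      rw [hval]
      exact hdHdiff.hasDerivAt.congr_of_eventuallyEq hevh'
    -- HasDerivAt of s and u^(p+1)
    have hds := hs_deriv θ
    have hdup : HasDerivAt (fun t => u t ^ (p+1)) (u' θ * (p+1) * u θ ^ p) θ := by
      have := hdu.rpow_const (p := p+1) (Or.inr (by linarith))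
      rwa [show p + 1 - 1 = p by ring] at this
    -- assemble
    have hc := (((((hdw.pow 2).const_mul ((1:ℝ)/2)).mul hdg).add
        (((hds.pow 2).mul hdg).mul
          ((hdup.div_const (p+1)).add ((hdu.pow 2).const_mul (lam/2))))).sub
        (hdw.mul (hdh.mul hdu))).add
        (((hdh'.mul hds).mul (hdu.pow 2)).const_mul ((1:ℝ)/2))
    refine hc.congr_deriv (Eq.symm ?_)
    have hhθ : h θ = (1/2) * g' θ * Real.sin θ ^ (n-1) := by rw [hh]
    simp only [hA, hB, Nat.cast_ofNat, pow_one, Pi.mul_apply, Pi.pow_apply, Pi.add_apply]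
    rw [r1 _ hsθ, r2 _ hsθ, r3 (u θ), hhθ]
    field_simp
    ring
  -- continuity of F on the closed interval
  have hupcont : ContinuousOn (fun t => u t ^ (p+1)) (Set.Icc 0 θ₁) :=
    hu.continuousOn.rpow_const (fun x _ => Or.inr (by linarith))
  have hFcont : ContinuousOn F (Set.Icc 0 θ₁) := by
    rw [hFdef]
    exact (((continuousOn_const.mul ((hscont.mul hu'cont).pow 2)).mul hg.continuousOn).add
        (((hscont.pow 2).mul hg.continuousOn).mul
          ((hupcont.div_const (p+1)).add (continuousOn_const.mul (hu.continuousOn.pow 2))))).sub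
        ((hscont.mul hu'cont).mul (hhC1.continuousOn.mul hu.continuousOn)) |>.add
        (continuousOn_const.mul ((hh'cont.mul hscont).mul (hu.continuousOn.pow 2)))
  -- FTC
  have hsum : IntervalIntegrable (fun θ => B θ * u θ ^ (p+1) + A θ * u θ^2) volume 0 θ₁ :=
    hintB.add hintA
  have hFTC : (∫ y in (0:ℝ)..θ₁, (B y * u y ^ (p+1) + A y * u y^2)) = F θ₁ - F 0 :=
    intervalIntegral.integral_eq_sub_of_hasDeriv_right_of_le hθ0.le hFcont
      (fun x hx => (key x hx).hasDerivWithinAt) hsum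
  have hs0 : Real.sin (0:ℝ) ^ (n-1) = 0 := by
    rw [Real.sin_zero, Real.zero_rpow (by linarith : n - 1 ≠ 0)]
  have hF0 : F 0 = 0 := by
    rw [hFdef]
    simp only [hs0, hu'0, hg0, zero_mul, mul_zero, zero_pow, zero_add, add_zero, sub_zero,
      zero_div, zero_sub, neg_zero]
  have hFθ₁ : F θ₁ = (1 / 2) * Real.sin θ₁ ^ (2 * n - 2) * (u' θ₁) ^ 2 * g θ₁ := by
    rw [hFdef]
    simp only [huθ₁, Real.zero_rpow hp1']
    rw [r1 _ hsinθ₁]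
    ring
  rw [← intervalIntegral.integral_add hintB hintA, hFTC, hF0, hFθ₁, sub_zero]
end
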